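/- arXiv:1807.03279 — 3 statements merged into one kernel-verified Lean document; each statement's English description precedes it below -/
import Mathlib

section
/- Let S : (ℝ³)^N → (ℝ³)^N be the discrete regularized-Stokeslet operator S(x)_k = Σ_{j=1}^N h² U(x_k − x_j)(F(x)_j). Assume the kernel is even, U(−r) = U(r) for all r ∈ ℝ³, and that each U(r) is a symmetric (self-adjoint) linear map on ℝ³. Then for all x, y, φ ∈ (ℝ³)^N (with all quantities evaluated at a point x where F is differentiable), the Fréchet derivative DS(x) satisfies the adjoint identity ⟨DS(x)(y), φ⟩ = ⟨y, Φ⟩, where for each k, Φ_k = Σ_{j=1}^N h² g_{kj} + (DF(x)*(ψ))_k, the vector g_{kj} ∈ ℝ³ is the unique vector satisfying ⟨g_{kj}, v⟩ = ⟨(DU(x_k − x_j)(v))(F(x)_j), φ_k⟩ + ⟨(DU(x_k − x_j)(v))(F(x)_k), φ_j⟩ for all v ∈ ℝ³, ψ_j = Σ_{i=1}^N h² U(x_j − x_i)(φ_i), and DF(x)* denotes the adjoint of DF(x) with respect to ⟨·,·⟩. -/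
open scoped RealInnerProductSpace

open Finset ContinuousLinearMap

/-!
Differentiating `S(x)_k = ∑_j h² U(x_k − x_j)(F(x)_j)` by the product and chain rules gives two
terms. In the one carrying `DF(x)`, symmetry and evenness of `U` make the discrete convolution
`z ↦ ∑_j h² U(x_k − x_j)(z_j)` self-adjoint, which turns it into `⟨y, DF(x)*(ψ)⟩`. In the one
carrying `DU`, evenness of `U` makes `DU` odd, so after swapping `k` and `j` the contribution of
`y_j` becomes a second contribution of `y_k`; together these are the functional represented by
`g_kj`.
-/

section Calculus

variable {𝕜 : Type*} [NontriviallyNormedField 𝕜]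
  {E V W : Type*} [NormedAddCommGroup E] [NormedSpace 𝕜 E] [NormedAddCommGroup V]
  [NormedSpace 𝕜 V] [NormedAddCommGroup W] [NormedSpace 𝕜 W]

theorem fderiv_neg_of_even {f : E → W} (hf : ∀ r, f (-r) = f r) (r : E) :
    fderiv 𝕜 f (-r) = -fderiv 𝕜 f r := by
  have h := fderiv_comp_smul (𝕜 := 𝕜) (f := f) (x := r) (-1)
  simp only [neg_smul, one_smul, hf] at h
  rw [h, neg_neg]

variable {ι : Type*} [Fintype ι]

def kernelSum (K : E → V →L[𝕜] W) (x : ι → E) (z : ι → V) : ι → W :=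
  fun k => ∑ j, K (x k - x j) (z j)

theorem hasFDerivAt_kernelSum {K : E → V →L[𝕜] W} {K' : ι → ι → E →L[𝕜] V →L[𝕜] W}
    {F : (ι → E) → ι → V} {F' : (ι → E) →L[𝕜] ι → V} {x : ι → E}
    (hK : ∀ k j, HasFDerivAt K (K' k j) (x k - x j)) (hF : HasFDerivAt F F' x) :
    HasFDerivAt (fun x => kernelSum K x (F x))
      (pi fun k => ∑ j, ((K (x k - x j)).comp ((proj j).comp F')
        + ((K' k j).comp ((proj k : (ι → E) →L[𝕜] E) - proj j)).flip (F x j))) x := by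
  refine hasFDerivAt_pi.2 fun k => HasFDerivAt.fun_sum fun j _ => ?_
  have hpos : HasFDerivAt (fun x : ι → E => x k - x j) (proj k - proj j) x :=
    ((proj k : (ι → E) →L[𝕜] E) - proj j).hasFDerivAt
  exact ((hK k j).comp x hpos).clm_apply ((proj j : (ι → V) →L[𝕜] V).hasFDerivAt.comp x hF)

theorem fderiv_kernelSum_apply {K : E → V →L[𝕜] W} {F : (ι → E) → ι → V} {x : ι → E}
    (hK : ∀ k j, DifferentiableAt 𝕜 K (x k - x j)) (hF : DifferentiableAt 𝕜 F x)
    (y : ι → E) (k : ι) :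
    fderiv 𝕜 (fun x => kernelSum K x (F x)) x y k =
      kernelSum K x (fderiv 𝕜 F x y) k + ∑ j, fderiv 𝕜 K (x k - x j) (y k - y j) (F x j) := by
  rw [(hasFDerivAt_kernelSum (fun k j => (hK k j).hasFDerivAt) hF.hasFDerivAt).fderiv]
  simp [kernelSum, sum_add_distrib]

end Calculus

section Adjoint

variable {ι : Type*} [Fintype ι]

theorem sum_inner_kernelSum_comm {E V : Type*} [NormedAddCommGroup E] [NormedSpace ℝ E]
    [NormedAddCommGroup V] [InnerProductSpace ℝ V] {K : E → V →L[ℝ] V} (hK_even : ∀ r, K (-r) = K r)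
    (hK_symm : ∀ r v w, ⟪K r v, w⟫ = ⟪v, K r w⟫) (x : ι → E) (z φ : ι → V) :
    ∑ k, ⟪kernelSum K x z k, φ k⟫ = ∑ k, ⟪z k, kernelSum K x φ k⟫ := by
  simp only [kernelSum, sum_inner, inner_sum]
  rw [sum_comm]
  refine sum_congr rfl fun k _ => sum_congr rfl fun j _ => ?_
  rw [hK_symm, ← neg_sub, hK_even]

theorem sum_sum_inner_apply_sub_of_antisymm {E V W : Type*} [NormedAddCommGroup E]
    [NormedSpace ℝ E] [NormedAddCommGroup V] [NormedSpace ℝ V] [NormedAddCommGroup W]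
    [InnerProductSpace ℝ W] {B : ι → ι → E →L[ℝ] V →L[ℝ] W}
    (hB : ∀ k j, B j k = -B k j) (y : ι → E) (f : ι → V) (φ : ι → W) :
    ∑ k, ∑ j, ⟪B k j (y k - y j) (f j), φ k⟫ =
      ∑ k, ∑ j, (⟪B k j (y k) (f j), φ k⟫ + ⟪B k j (y k) (f k), φ j⟫) := by
  have hswap : ∑ k, ∑ j, ⟪B k j (y j) (f j), φ k⟫ = -∑ k, ∑ j, ⟪B k j (y k) (f k), φ j⟫ := by
    rw [sum_comm, ← sum_neg_distrib]
    refine sum_congr rfl fun k _ => ?_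
    rw [← sum_neg_distrib]
    refine sum_congr rfl fun j _ => ?_
    rw [hB, neg_apply, neg_apply, inner_neg_left]
  simp only [map_sub, sub_apply, inner_sub_left, sum_sub_distrib, sum_add_distrib, hswap,
    sub_neg_eq_add]

theorem sum_inner_fderiv_kernelSum {E V : Type*} [NormedAddCommGroup E] [InnerProductSpace ℝ E]
    [NormedAddCommGroup V] [InnerProductSpace ℝ V] {K : E → V →L[ℝ] V} {F : (ι → E) → ι → V} {x : ι → E}
    (hK : ∀ k j, DifferentiableAt ℝ K (x k - x j)) (hK_even : ∀ r, K (-r) = K r)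
    (hK_symm : ∀ r v w, ⟪K r v, w⟫ = ⟪v, K r w⟫) (hF : DifferentiableAt ℝ F x)
    {Fadj : (ι → V) → ι → E}
    (hFadj : ∀ u v, ∑ k, ⟪fderiv ℝ F x u k, v k⟫ = ∑ k, ⟪u k, Fadj v k⟫)
    {φ : ι → V} {g : ι → ι → E}
    (hg : ∀ k j v, ⟪g k j, v⟫ =
      ⟪fderiv ℝ K (x k - x j) v (F x j), φ k⟫ + ⟪fderiv ℝ K (x k - x j) v (F x k), φ j⟫)
    (y : ι → E) :
    ∑ k, ⟪fderiv ℝ (fun x => kernelSum K x (F x)) x y k, φ k⟫ =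
      ∑ k, ⟪y k, ∑ j, g k j + Fadj (kernelSum K x φ) k⟫ := by
  have hDK_odd : ∀ k j, fderiv ℝ K (x j - x k) = -fderiv ℝ K (x k - x j) := fun k j => by
    rw [← neg_sub, fderiv_neg_of_even hK_even]
  calc ∑ k, ⟪fderiv ℝ (fun x => kernelSum K x (F x)) x y k, φ k⟫
      = ∑ k, ⟪kernelSum K x (fderiv ℝ F x y) k, φ k⟫ +
          ∑ k, ∑ j, ⟪fderiv ℝ K (x k - x j) (y k - y j) (F x j), φ k⟫ := by
        simp only [fderiv_kernelSum_apply hK hF, inner_add_left, sum_inner, sum_add_distrib]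
    _ = ∑ k, ⟪y k, Fadj (kernelSum K x φ) k⟫ + ∑ k, ∑ j, ⟪y k, g k j⟫ := by
        rw [sum_inner_kernelSum_comm hK_even hK_symm, hFadj,
          sum_sum_inner_apply_sub_of_antisymm (B := fun k j => fderiv ℝ K (x k - x j)) hDK_odd]
        simp only [real_inner_comm (g _ _), hg]
    _ = ∑ k, ⟪y k, ∑ j, g k j + Fadj (kernelSum K x φ) k⟫ := by
        simp only [inner_add_right, inner_sum, sum_add_distrib]
        ring

end Adjoint

theorem stokeslet_fderiv_adjoint_identity_general
    (N : ℕ) (h : ℝ)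
    (U : EuclideanSpace ℝ (Fin 3) →
      (EuclideanSpace ℝ (Fin 3) →L[ℝ] EuclideanSpace ℝ (Fin 3)))
    (hU : ContDiff ℝ 1 U)
    (hUeven : ∀ r, U (-r) = U r)
    (hUsymm : ∀ r v w, ⟪U r v, w⟫ = ⟪v, U r w⟫)
    (F : (Fin N → EuclideanSpace ℝ (Fin 3)) → (Fin N → EuclideanSpace ℝ (Fin 3)))
    (hF : ContDiff ℝ 1 F)
    (S : (Fin N → EuclideanSpace ℝ (Fin 3)) → (Fin N → EuclideanSpace ℝ (Fin 3)))
    (hS : ∀ x k, S x k = ∑ j, h ^ 2 • (U (x k - x j)) (F x j))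
    (x y φ : Fin N → EuclideanSpace ℝ (Fin 3))
    -- `Fadj` is the adjoint of `DF(x)` with respect to the inner product
    -- `⟨u, v⟩ = ∑ k ⟨u k, v k⟩` on `(ℝ³)^N`:
    (Fadj : (Fin N → EuclideanSpace ℝ (Fin 3)) →L[ℝ] (Fin N → EuclideanSpace ℝ (Fin 3)))
    (hFadj : ∀ u v, (∑ k, ⟪(fderiv ℝ F x) u k, v k⟫) = ∑ k, ⟪u k, Fadj v k⟫)
    -- `g k j` is the (unique) vector representing the stated functional:
    (g : Fin N → Fin N → EuclideanSpace ℝ (Fin 3))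
    (hg : ∀ k j v, ⟪g k j, v⟫ =
        ⟪(fderiv ℝ U (x k - x j) v) (F x j), φ k⟫
        + ⟪(fderiv ℝ U (x k - x j) v) (F x k), φ j⟫)
    (ψ : Fin N → EuclideanSpace ℝ (Fin 3))
    (hψ : ∀ j, ψ j = ∑ i, h ^ 2 • (U (x j - x i)) (φ i))
    (Φ : Fin N → EuclideanSpace ℝ (Fin 3))
    (hΦ : ∀ k, Φ k = (∑ j, h ^ 2 • g k j) + Fadj ψ k) :
    (∑ k, ⟪fderiv ℝ S x y k, φ k⟫) = ∑ k, ⟪y k, Φ k⟫ := by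
  have hU_diff := hU.differentiable one_ne_zero
  have hK_deriv : ∀ r, fderiv ℝ (h ^ 2 • U) r = h ^ 2 • fderiv ℝ U r := fun r =>
    fderiv_const_smul (hU_diff r) _
  have hK_even : ∀ r, (h ^ 2 • U) (-r) = (h ^ 2 • U) r := fun r => by
    rw [Pi.smul_apply, hUeven, Pi.smul_apply]
  have hK_symm : ∀ r v w, ⟪(h ^ 2 • U) r v, w⟫ = ⟪v, (h ^ 2 • U) r w⟫ := fun r v w => by
    simp only [Pi.smul_apply, smul_apply, real_inner_smul_left, real_inner_smul_right, hUsymm]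
  have hK_g : ∀ k j v, ⟪h ^ 2 • g k j, v⟫ =
      ⟪fderiv ℝ (h ^ 2 • U) (x k - x j) v (F x j), φ k⟫ +
        ⟪fderiv ℝ (h ^ 2 • U) (x k - x j) v (F x k), φ j⟫ := fun k j v => by
    simp only [hK_deriv, smul_apply, real_inner_smul_left, hg, mul_add]
  obtain rfl : S = fun x => kernelSum (h ^ 2 • U) x (F x) := funext fun x => funext (hS x)
  obtain rfl : ψ = kernelSum (h ^ 2 • U) x φ := funext hψ
  simp only [hΦ]
  exact sum_inner_fderiv_kernelSum (fun _ _ => (hU_diff _).const_smul _) hK_even hK_symm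
    (hF.differentiable one_ne_zero x) hFadj hK_g y

/-- Adjoint identity for the Fréchet derivative of the discrete
regularized-Stokeslet operator `S(x)_k = ∑_j h² U(x_k − x_j)(F(x)_j)`.
Assuming the kernel is even (`U(−r) = U(r)`) and each `U(r)` is self-adjoint on ℝ³, we have
`⟨DS(x)(y), φ⟩ = ⟨y, Φ⟩` where
`Φ_k = ∑_j h² g_kj + (DF(x)*(ψ))_k`,
`⟨g_kj, v⟩ = ⟨(DU(x_k−x_j)(v))(F(x)_j), φ_k⟩ + ⟨(DU(x_k−x_j)(v))(F(x)_k), φ_j⟩`,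
`ψ_j = ∑_i h² U(x_j − x_i)(φ_i)`, and `DF(x)*` is the adjoint of `DF(x)` w.r.t. `⟨·,·⟩`. -/
theorem stokeslet_fderiv_adjoint_identity
    (N : ℕ) (h : ℝ) (hh : 0 < h)
    (U : EuclideanSpace ℝ (Fin 3) →
      (EuclideanSpace ℝ (Fin 3) →L[ℝ] EuclideanSpace ℝ (Fin 3)))
    (hU : ContDiff ℝ 1 U)
    (hUeven : ∀ r, U (-r) = U r)
    (hUsymm : ∀ r v w, ⟪U r v, w⟫ = ⟪v, U r w⟫)
    (F : (Fin N → EuclideanSpace ℝ (Fin 3)) → (Fin N → EuclideanSpace ℝ (Fin 3)))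
    (hF : ContDiff ℝ 1 F)
    (S : (Fin N → EuclideanSpace ℝ (Fin 3)) → (Fin N → EuclideanSpace ℝ (Fin 3)))
    (hS : ∀ x k, S x k = ∑ j, h ^ 2 • (U (x k - x j)) (F x j))
    (x y φ : Fin N → EuclideanSpace ℝ (Fin 3))
    -- `Fadj` is the adjoint of `DF(x)` with respect to the inner product
    -- `⟨u, v⟩ = ∑ k ⟨u k, v k⟩` on `(ℝ³)^N`:
    (Fadj : (Fin N → EuclideanSpace ℝ (Fin 3)) →L[ℝ] (Fin N → EuclideanSpace ℝ (Fin 3)))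
    (hFadj : ∀ u v, (∑ k, ⟪(fderiv ℝ F x) u k, v k⟫) = ∑ k, ⟪u k, Fadj v k⟫)
    -- `g k j` is the (unique) vector representing the stated functional:
    (g : Fin N → Fin N → EuclideanSpace ℝ (Fin 3))
    (hg : ∀ k j v, ⟪g k j, v⟫ =
        ⟪(fderiv ℝ U (x k - x j) v) (F x j), φ k⟫
        + ⟪(fderiv ℝ U (x k - x j) v) (F x k), φ j⟫)
    (ψ : Fin N → EuclideanSpace ℝ (Fin 3))
    (hψ : ∀ j, ψ j = ∑ i, h ^ 2 • (U (x j - x i)) (φ i))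
    (Φ : Fin N → EuclideanSpace ℝ (Fin 3))
    (hΦ : ∀ k, Φ k = (∑ j, h ^ 2 • g k j) + Fadj ψ k) :
    (∑ k, ⟪fderiv ℝ S x y k, φ k⟫) = ∑ k, ⟪y k, Φ k⟫ :=
  stokeslet_fderiv_adjoint_identity_general N h U hU hUeven hUsymm F hF S hS x y φ Fadj hFadj g hg ψ
    hψ Φ hΦ
end

section
/- Suppose the modified Galerkin orthogonality holds: ∫₀ᵀ ⟨Ẋ(t), πz(t)⟩ dt = Σ_{ℓ=1}^L b_ℓ Q_ℓ. Then the residual pairing decomposes exactly as ∫₀ᵀ ⟨Ẋ(t) − f(t), z(t)⟩ dt = E_R + E_E + E_Q, where E_R = ∫₀ᵀ ⟨Ẋ(t) − Σ_{ℓ=1}^L b_ℓ G_ℓ(t), z(t) − πz(t)⟩ dt (the residual error), E_E = ∫₀ᵀ ⟨Σ_{ℓ=1}^L b_ℓ G_ℓ(t) − f(t), z(t)⟩ dt (the explicit/extrapolation error), and E_Q = Σ_{ℓ=1}^L b_ℓ ( Q_ℓ − ∫₀ᵀ ⟨G_ℓ(t), πz(t)⟩ dt ) (the quadrature error). -/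
/-!
Pointwise, `⟪Ẋ - f, z⟫` splits into the residual and explicit terms plus `⟪Ẋ, πz⟫ - ⟪S, πz⟫`,
where `S = ∑ ℓ, b ℓ • G ℓ`. After integration, Galerkin orthogonality turns `∫ ⟪Ẋ, πz⟫` into
`∑ ℓ, b ℓ * Q ℓ` and linearity turns `∫ ⟪S, πz⟫` into `∑ ℓ, b ℓ * ∫ ⟪G ℓ, πz⟫`; their difference
is the quadrature error.
-/

open scoped RealInnerProductSpace

open Set MeasureTheory

section

variable {E : Type*} [NormedAddCommGroup E] [InnerProductSpace ℝ E]

theorem inner_sub_eq_inner_sub_sub_add_inner_sub_add (x s f z v : E) :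
    ⟪x - f, z⟫ = ⟪x - s, z - v⟫ + ⟪s - f, z⟫ + (⟪x, v⟫ - ⟪s, v⟫) := by
  simp only [inner_sub_left, inner_sub_right]
  ring

theorem ContinuousOn.intervalIntegrable_inner_of_Icc {f g : ℝ → E} {a b : ℝ} (hab : a ≤ b)
    (hf : ContinuousOn f (Icc a b)) (hg : ContinuousOn g (Icc a b)) :
    IntervalIntegrable (fun t => ⟪f t, g t⟫) volume a b :=
  (hf.inner hg).intervalIntegrable_of_Icc hab

theorem intervalIntegral.integral_inner_sum_smul_left {ι : Type*} (s : Finset ι) (c : ι → ℝ)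
    (G : ι → ℝ → E) (v : ℝ → E) {a b : ℝ}
    (hG : ∀ i ∈ s, IntervalIntegrable (fun t => ⟪G i t, v t⟫) volume a b) :
    ∫ t in a..b, ⟪∑ i ∈ s, c i • G i t, v t⟫ = ∑ i ∈ s, c i * ∫ t in a..b, ⟪G i t, v t⟫ := by
  simp only [sum_inner, real_inner_smul_left]
  rw [intervalIntegral.integral_finsetSum fun i hi => (hG i hi).const_mul (c i)]
  simp only [intervalIntegral.integral_const_mul]

theorem intervalIntegral.integral_inner_sub_eq {x s f z v : ℝ → E} {a b : ℝ} (hab : a ≤ b)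
    (hx : ContinuousOn x (Icc a b)) (hs : ContinuousOn s (Icc a b))
    (hf : ContinuousOn f (Icc a b)) (hz : ContinuousOn z (Icc a b))
    (hv : ContinuousOn v (Icc a b)) :
    ∫ t in a..b, ⟪x t - f t, z t⟫ =
      (∫ t in a..b, ⟪x t - s t, z t - v t⟫) + (∫ t in a..b, ⟪s t - f t, z t⟫)
        + ((∫ t in a..b, ⟪x t, v t⟫) - ∫ t in a..b, ⟪s t, v t⟫) := by
  have h₁ : IntervalIntegrable (fun t => ⟪x t - s t, z t - v t⟫) volume a b :=
    (hx.sub hs).intervalIntegrable_inner_of_Icc hab (hz.sub hv)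
  have h₂ : IntervalIntegrable (fun t => ⟪s t - f t, z t⟫) volume a b :=
    (hs.sub hf).intervalIntegrable_inner_of_Icc hab hz
  have h₃ := hx.intervalIntegrable_inner_of_Icc hab hv
  have h₄ := hs.intervalIntegrable_inner_of_Icc hab hv
  rw [funext fun t => inner_sub_eq_inner_sub_sub_add_inner_sub_add (x t) (s t) (f t) (z t) (v t),
    intervalIntegral.integral_add (h₁.add h₂) (h₃.sub h₄), intervalIntegral.integral_add h₁ h₂,
    intervalIntegral.integral_sub h₃ h₄]

end

theorem residual_error_decomposition_general
    (n L : ℕ) (T : ℝ) (hT : 0 < T)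
    (X' f : ℝ → EuclideanSpace ℝ (Fin n))
    (G : Fin L → ℝ → EuclideanSpace ℝ (Fin n))
    (b : Fin L → ℝ)
    (z πz : ℝ → EuclideanSpace ℝ (Fin n))
    (hX' : ContinuousOn X' (Set.Icc 0 T))
    (hf : ContinuousOn f (Set.Icc 0 T))
    (hG : ∀ ℓ, ContinuousOn (G ℓ) (Set.Icc 0 T))
    (hz : ContinuousOn z (Set.Icc 0 T))
    (hπz : ContinuousOn πz (Set.Icc 0 T))
    (Q : Fin L → ℝ)
    -- modified Galerkin orthogonality
    (hGal : (∫ t in (0 : ℝ)..T, ⟪X' t, πz t⟫) = ∑ ℓ, b ℓ * Q ℓ) :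
    (∫ t in (0 : ℝ)..T, ⟪X' t - f t, z t⟫) =
      (∫ t in (0 : ℝ)..T, ⟪X' t - ∑ ℓ, b ℓ • G ℓ t, z t - πz t⟫)
      + (∫ t in (0 : ℝ)..T, ⟪(∑ ℓ, b ℓ • G ℓ t) - f t, z t⟫)
      + ∑ ℓ, b ℓ * (Q ℓ - ∫ t in (0 : ℝ)..T, ⟪G ℓ t, πz t⟫) := by
  have hS : ContinuousOn (fun t => ∑ ℓ, b ℓ • G ℓ t) (Icc 0 T) :=
    continuousOn_finsetSum _ fun ℓ _ => (hG ℓ).const_smul (b ℓ)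
  rw [intervalIntegral.integral_inner_sub_eq hT.le hX' hS hf hz hπz, hGal,
    intervalIntegral.integral_inner_sum_smul_left _ _ _ _
      fun ℓ _ => (hG ℓ).intervalIntegrable_inner_of_Icc hT.le hπz]
  simp only [mul_sub, Finset.sum_sub_distrib]

/-- Under the modified Galerkin orthogonality
`∫₀ᵀ ⟨Ẋ, πz⟩ = ∑_ℓ b_ℓ Q_ℓ`, the residual pairing decomposes exactly as
`∫₀ᵀ ⟨Ẋ − f, z⟩ = E_R + E_E + E_Q` with
`E_R = ∫₀ᵀ ⟨Ẋ − ∑_ℓ b_ℓ G_ℓ, z − πz⟩`,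
`E_E = ∫₀ᵀ ⟨∑_ℓ b_ℓ G_ℓ − f, z⟩`,
`E_Q = ∑_ℓ b_ℓ (Q_ℓ − ∫₀ᵀ ⟨G_ℓ, πz⟩)`. -/
theorem residual_error_decomposition
    (n L Qn : ℕ) (T : ℝ) (hT : 0 < T)
    (X X' f : ℝ → EuclideanSpace ℝ (Fin n))
    (G : Fin L → ℝ → EuclideanSpace ℝ (Fin n))
    (b : Fin L → ℝ)
    (z πz : ℝ → EuclideanSpace ℝ (Fin n))
    (hX : ∀ t ∈ Set.Icc (0 : ℝ) T, HasDerivAt X (X' t) t)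
    (hX' : ContinuousOn X' (Set.Icc 0 T))
    (hf : ContinuousOn f (Set.Icc 0 T))
    (hG : ∀ ℓ, ContinuousOn (G ℓ) (Set.Icc 0 T))
    (hz : ContinuousOn z (Set.Icc 0 T))
    (hπz : ContinuousOn πz (Set.Icc 0 T))
    -- quadrature weights and nodes
    (w : Fin L → Fin Qn → ℝ) (tq : Fin L → Fin Qn → ℝ)
    (htq : ∀ ℓ q, tq ℓ q ∈ Set.Icc (0 : ℝ) T)
    (Q : Fin L → ℝ)
    (hQ : ∀ ℓ, Q ℓ = ∑ q, w ℓ q * ⟪G ℓ (tq ℓ q), πz (tq ℓ q)⟫)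
    -- modified Galerkin orthogonality
    (hGal : (∫ t in (0 : ℝ)..T, ⟪X' t, πz t⟫) = ∑ ℓ, b ℓ * Q ℓ) :
    (∫ t in (0 : ℝ)..T, ⟪X' t - f t, z t⟫) =
      (∫ t in (0 : ℝ)..T, ⟪X' t - ∑ ℓ, b ℓ • G ℓ t, z t - πz t⟫)
      + (∫ t in (0 : ℝ)..T, ⟪(∑ ℓ, b ℓ • G ℓ t) - f t, z t⟫)
      + ∑ ℓ, b ℓ * (Q ℓ - ∫ t in (0 : ℝ)..T, ⟪G ℓ t, πz t⟫) :=
  residual_error_decomposition_general n L T hT X' f G b z πz hX' hf hG hz hπz Q hGal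
end

section
/- With z : [0,T] → ℝⁿ any differentiable solution of the adjoint equation ż(t) = −A(t)ᵀ z(t), the following error representation formula holds: ∫₀ᵀ ⟨F(t, X(t)) − Ẋ(t), z(t)⟩ dt = ⟨e(T), z(T)⟩, i.e. the time-integrated pairing of the negative residual with the adjoint solution equals the inner product of the final-time error with the adjoint final data. -/
open scoped RealInnerProductSpace

/-! The averaged Jacobian is a secant operator: `A(t) e(t) = F(t, x(t)) - F(t, X(t))`. Hence
`d/dt ⟪e, z⟫ = ⟪ė - A e, z⟫ = ⟪F(t, X) - Ẋ, z⟫` along the adjoint solution `z`, and the formula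
is the fundamental theorem of calculus for `⟪e, z⟫`, with `e(0) = 0`. -/

section SecantOperator

variable {E G : Type*} [NormedAddCommGroup E] [NormedSpace ℝ E]
  [NormedAddCommGroup G] [NormedSpace ℝ G] [CompleteSpace G]

theorem ContDiff.integral_fderiv_segment_apply {f : E → G} (hf : ContDiff ℝ 1 f) (u v : E) :
    (∫ s in (0 : ℝ)..1, fderiv ℝ f (s • u + (1 - s) • v)) (u - v) = f u - f v := by
  have hpath : ∀ s : ℝ, s • u + (1 - s) • v = v + s • (u - v) := fun s => by
    rw [smul_sub, sub_smul, one_smul]; abel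
  have hcont : Continuous fun s : ℝ => fderiv ℝ f (s • u + (1 - s) • v) :=
    (hf.continuous_fderiv one_ne_zero).comp (by fun_prop)
  have hderiv : ∀ s ∈ Set.uIcc (0 : ℝ) 1, HasDerivAt (fun s : ℝ => f (v + s • (u - v)))
      (fderiv ℝ f (s • u + (1 - s) • v) (u - v)) s := fun s _ => by
    have hline : HasDerivAt (fun s : ℝ => v + s • (u - v)) (u - v) s := by
      simpa using ((hasDerivAt_id s).smul_const (u - v)).const_add v
    rw [hpath s]
    exact (hf.differentiable one_ne_zero _).hasFDerivAt.comp_hasDerivAt s hline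
  rw [ContinuousLinearMap.intervalIntegral_apply (hcont.intervalIntegrable _ _),
    intervalIntegral.integral_eq_sub_of_hasDerivAt hderiv
      ((hcont.clm_apply continuous_const).intervalIntegrable _ _)]
  simp

end SecantOperator

section AdjointPairing

variable {E : Type*} [NormedAddCommGroup E] [InnerProductSpace ℝ E] [CompleteSpace E]

theorem HasDerivAt.inner_of_hasDerivAt_neg_adjoint {e z : ℝ → E} {e' : E} {A : E →L[ℝ] E}
    {t : ℝ} (he : HasDerivAt e e' t)
    (hz : HasDerivAt z (-(ContinuousLinearMap.adjoint A) (z t)) t) :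
    HasDerivAt (fun t => ⟪e t, z t⟫) ⟪e' - A (e t), z t⟫ t := by
  refine (he.inner ℝ hz).congr_deriv ?_
  rw [inner_neg_right, ContinuousLinearMap.adjoint_inner_right, inner_sub_left]
  ring

end AdjointPairing

theorem error_representation_formula_general
    (n : ℕ) (T : ℝ) (hT : 0 < T)
    (F : ℝ → EuclideanSpace ℝ (Fin n) → EuclideanSpace ℝ (Fin n))
    (hFc : Continuous (fun p : ℝ × EuclideanSpace ℝ (Fin n) => F p.1 p.2))
    (hFd : ∀ t, ContDiff ℝ 1 (F t))
    (x X X' : ℝ → EuclideanSpace ℝ (Fin n))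
    (hx : ∀ t ∈ Set.Icc (0 : ℝ) T, HasDerivAt x (F t (x t)) t)
    (hX : ∀ t ∈ Set.Icc (0 : ℝ) T, HasDerivAt X (X' t) t)
    (hX' : ContinuousOn X' (Set.Icc 0 T))
    (hX0 : X 0 = x 0)
    (A : ℝ → EuclideanSpace ℝ (Fin n) →L[ℝ] EuclideanSpace ℝ (Fin n))
    (hA : ∀ t, A t = ∫ s in (0 : ℝ)..1, fderiv ℝ (F t) (s • x t + (1 - s) • X t))
    (z : ℝ → EuclideanSpace ℝ (Fin n))
    (hz : ∀ t ∈ Set.Icc (0 : ℝ) T,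
      HasDerivAt z (-(ContinuousLinearMap.adjoint (A t)) (z t)) t) :
    (∫ t in (0 : ℝ)..T, ⟪F t (X t) - X' t, z t⟫) = ⟪x T - X T, z T⟫ := by
  have hIcc : Set.uIcc 0 T = Set.Icc 0 T := Set.uIcc_of_le hT.le
  have hderiv : ∀ t ∈ Set.uIcc 0 T,
      HasDerivAt (fun t => ⟪x t - X t, z t⟫) ⟪F t (X t) - X' t, z t⟫ t := fun t ht => by
    rw [hIcc] at ht
    refine (((hx t ht).sub (hX t ht)).inner_of_hasDerivAt_neg_adjoint (hz t ht)).congr_deriv ?_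
    rw [Pi.sub_apply, hA, (hFd t).integral_fderiv_segment_apply, sub_sub_sub_cancel_left]
  have hXc : ContinuousOn X (Set.Icc 0 T) := fun t ht => (hX t ht).continuousAt.continuousWithinAt
  have hzc : ContinuousOn z (Set.Icc 0 T) := fun t ht => (hz t ht).continuousAt.continuousWithinAt
  have hint : IntervalIntegrable (fun t => ⟪F t (X t) - X' t, z t⟫) MeasureTheory.volume 0 T := by
    refine ContinuousOn.intervalIntegrable ?_
    rw [hIcc]
    exact ((hFc.comp_continuousOn (continuousOn_id.prodMk hXc)).sub hX').inner hzc
  rw [intervalIntegral.integral_eq_sub_of_hasDerivAt hderiv hint, hX0, sub_self, inner_zero_left,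
    sub_zero]

/-- With `z` any differentiable solution of the adjoint equation
`ż(t) = −A(t)ᵀ z(t)`, where `A(t) = ∫₀¹ D_xF(t, s·x(t) + (1−s)·X(t)) ds` is the
trajectory-averaged Jacobian, the error representation formula holds:
`∫₀ᵀ ⟨F(t, X(t)) − Ẋ(t), z(t)⟩ dt = ⟨e(T), z(T)⟩` with `e = x − X`. -/
theorem error_representation_formula
    (n : ℕ) (T : ℝ) (hT : 0 < T)
    (F : ℝ → EuclideanSpace ℝ (Fin n) → EuclideanSpace ℝ (Fin n))
    (hFc : Continuous (fun p : ℝ × EuclideanSpace ℝ (Fin n) => F p.1 p.2))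
    (hFd : ∀ t, ContDiff ℝ 1 (F t))
    (hFd' : Continuous (fun p : ℝ × EuclideanSpace ℝ (Fin n) => fderiv ℝ (F p.1) p.2))
    (x X X' : ℝ → EuclideanSpace ℝ (Fin n))
    (hx : ∀ t ∈ Set.Icc (0 : ℝ) T, HasDerivAt x (F t (x t)) t)
    (hX : ∀ t ∈ Set.Icc (0 : ℝ) T, HasDerivAt X (X' t) t)
    (hX' : ContinuousOn X' (Set.Icc 0 T))
    (hX0 : X 0 = x 0)
    (A : ℝ → EuclideanSpace ℝ (Fin n) →L[ℝ] EuclideanSpace ℝ (Fin n))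
    (hA : ∀ t, A t = ∫ s in (0 : ℝ)..1, fderiv ℝ (F t) (s • x t + (1 - s) • X t))
    (z : ℝ → EuclideanSpace ℝ (Fin n))
    (hz : ∀ t ∈ Set.Icc (0 : ℝ) T,
      HasDerivAt z (-(ContinuousLinearMap.adjoint (A t)) (z t)) t) :
    (∫ t in (0 : ℝ)..T, ⟪F t (X t) - X' t, z t⟫) = ⟪x T - X T, z T⟫ :=
  error_representation_formula_general n T hT F hFc hFd x X X' hx hX hX' hX0 A hA z hz
end
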